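/- Under Hypothesis (H), write Q = t(y)·T(x,y) with t in k[y] the content and T the primitive part of Q with respect to x; let t* and T* be the squarefree parts of t and T with respect to y (so that Q* = t*·T*). For each natural number i let N_i in k[x,y] be defined by D_x^i(f) = N_i/(Q·(T*)^i), where f = P/Q. Fix ρ in ℕ and η_0, …, η_ρ in k(x); set F = Σ_{i=0}^{ρ} η_i·D_x^i(f), N = Σ_{i=0}^{ρ} η_i·N_i·(T*)^{ρ−i}, and H = −D_y(Q)/Q^- − ρ·t*·D_y(T*). If F is nonzero, then (N, H, Q*) is a differential Gosper form of D_y(F)/F over the field k(x): namely D_y(F)/F = D_y(N)/N + H/Q*, and gcd(Q*, H − τ·D_y(Q*)) = 1 for every natural number τ. -/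

import Mathlib

/-!
Clearing denominators gives `F · d = N` with `d = Q·(T*)^ρ`, so `D_y(F)/F = D_y(N)/N - D_y(d)/d`,
and `H` is built so that `H/Q* = -D_y(d)/d`.

For coprimality, an irreducible common factor over `k(x)` lifts, by Gauss's lemma, to a primitive
prime `p` of `k[x][y]` dividing exactly one factor `Q_l` of `Q* = ∏ Q_i`. Modulo `p`, every Leibniz
term `W_i = Q_i' ∏_{j ≠ i} Q_j` with `i ≠ l` vanishes, and `t*·D_y(T*) ≡ ε·W_l` with `ε = 0` or `1`
according as `p` divides `t*` or `T*`; hence `H - τ·D_y(Q*) ≡ -(l + 1 + τ + ρε)·W_l`. This is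
nonzero modulo `p` because `Q_l` is squarefree, coprime to the other `Q_j`, and `char k = 0`.
-/

open Polynomial

noncomputable section

/-- A map is a derivation: it is additive and satisfies the Leibniz rule. -/
def IsDeriv {F : Type*} [CommRing F] (D : F → F) : Prop :=
  (∀ a b, D (a + b) = D a + D b) ∧ ∀ a b, D (a * b) = a * D b + b * D a

/-- Degree in `x` of an element of `k[x][y]` (inner variable `x`, outer variable `y`). -/
def degX {k : Type*} [Field k] (Q : Polynomial (Polynomial k)) : ℕ :=
  Q.support.sup fun i => (Q.coeff i).natDegree

/-- Partial derivative with respect to `x` on `k[x][y]`. -/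
def derivX {k : Type*} [Field k] (Q : Polynomial (Polynomial k)) : Polynomial (Polynomial k) :=
  Q.sum fun i a => Polynomial.C (Polynomial.derivative a) * Polynomial.X ^ i

/-- The embedding `k[x][y] → k(x)(y)`. -/
def toF {k : Type*} [Field k] : Polynomial (Polynomial k) →+* RatFunc (RatFunc k) :=
  (algebraMap (Polynomial (RatFunc k)) (RatFunc (RatFunc k))).comp
    (Polynomial.mapRingHom (algebraMap (Polynomial k) (RatFunc k)))

/-- The embedding `k(x) → k(x)(y)`. -/
def ratToF {k : Type*} [Field k] : RatFunc k →+* RatFunc (RatFunc k) :=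
  (algebraMap (Polynomial (RatFunc k)) (RatFunc (RatFunc k))).comp
    (Polynomial.C : RatFunc k →+* Polynomial (RatFunc k))

/-- The embedding `k(x)[y] → k(x)(y)`. -/
def kyToF {k : Type*} [Field k] : Polynomial (RatFunc k) →+* RatFunc (RatFunc k) :=
  algebraMap (Polynomial (RatFunc k)) (RatFunc (RatFunc k))

/-- The embedding `k[x][y] → k(x)[y]`. -/
def toKy {k : Type*} [Field k] : Polynomial (Polynomial k) →+* Polynomial (RatFunc k) :=
  Polynomial.mapRingHom (algebraMap (Polynomial k) (RatFunc k))

/-- The embedding `k[y] → k[x][y]` (a polynomial in `y` viewed in `k[x][y]`). -/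
def yToXY {k : Type*} [Field k] : Polynomial k →+* Polynomial (Polynomial k) :=
  Polynomial.mapRingHom (Polynomial.C : k →+* Polynomial k)

/-- The Hermite matrix associated with a factorisation `Q = Qs * Qneg`, with respect to the
monomial bases: its columns are the coefficient vectors (in `y`, coefficients in `k[x]`) of
`Qs * D_y(y^j) - E * y^j` for `j < dm` (where `E = Qs * D_y(Qneg) / Qneg`) and of
`Qneg * y^j` for `j < dy - dm`. -/
def hermiteMat {k : Type*} [Field k] (Qs Qneg E : Polynomial (Polynomial k)) (dy dm : ℕ) :
    Matrix (Fin dy) (Fin dy) (Polynomial k) :=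
  Matrix.of fun i j =>
    if (j : ℕ) < dm then
      (Qs * Polynomial.derivative (Polynomial.X ^ (j : ℕ)) - E * Polynomial.X ^ (j : ℕ)).coeff i
    else
      (Qneg * Polynomial.X ^ ((j : ℕ) - dm)).coeff i

open Finset

section CommRing

variable {R : Type*} [CommRing R]

theorem Polynomial.IsPrimitive.isUnit_of_natDegree_eq_zero {p : R[X]} (hp : p.IsPrimitive)
    (h : p.natDegree = 0) : IsUnit p := by
  rw [eq_C_of_natDegree_eq_zero h, isUnit_C]
  exact hp _ (eq_C_of_natDegree_eq_zero h ▸ dvd_rfl)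

def leibnizTerm (Q : ℕ → R[X]) (m i : ℕ) : R[X] :=
  (∏ j ∈ (range m).erase i, Q j) * derivative (Q i)

theorem derivative_prod_range (Q : ℕ → R[X]) (m : ℕ) :
    derivative (∏ i ∈ range m, Q i) = ∑ i ∈ range m, leibnizTerm Q m i :=
  derivative_prod_finset

theorem derivative_prod_range_pow_succ (Q : ℕ → R[X]) (m : ℕ) :
    derivative (∏ i ∈ range m, Q i ^ (i + 1)) =
      (∏ i ∈ range m, Q i ^ i) * ∑ i ∈ range m, (i + 1) • leibnizTerm Q m i := by
  rw [derivative_prod_finset, mul_sum]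
  refine sum_congr rfl fun i hi => ?_
  have hsplit : ∏ j ∈ range m, Q j ^ j = Q i ^ i * ∏ j ∈ (range m).erase i, Q j ^ j :=
    (mul_prod_erase _ _ hi).symm
  rw [derivative_pow_succ, hsplit, leibnizTerm, nsmul_eq_mul, ← Nat.cast_succ, C_eq_natCast,
    prod_congr rfl fun j _ => pow_succ (Q j) j, prod_mul_distrib]
  ring

theorem derivative_eq_mul_sum_leibnizTerm [IsDomain R] {Q Qs Qneg : R[X]} {q : R}
    {Qi : ℕ → R[X]} {m : ℕ} (hfac : Q = C q * ∏ i ∈ range m, Qi i ^ (i + 1))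
    (hQs : Qs = ∏ i ∈ range m, Qi i) (hQneg : Q = Qs * Qneg) (hQ : Q ≠ 0) :
    derivative Q = Qneg * ∑ i ∈ range m, (i + 1) • leibnizTerm Qi m i := by
  have hQs0 : Qs ≠ 0 := left_ne_zero_of_mul (hQneg ▸ hQ)
  have hQneg' : Qneg = C q * ∏ i ∈ range m, Qi i ^ i := by
    refine mul_left_cancel₀ hQs0 ?_
    rw [← hQneg, hfac, hQs, prod_congr rfl fun i _ => pow_succ (Qi i) i, prod_mul_distrib]
    ring
  rw [hfac, derivative_C_mul, derivative_prod_range_pow_succ, hQneg', mul_assoc]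

theorem mul_mul_pow_eq_neg_derivative_mul {Q Qs Qneg c T H : R[X]} (ρ : ℕ)
    (hQ : Q = Qs * Qneg) (hQs : Qs = c * T)
    (hH : H * Qneg = -derivative Q - (ρ • (c * derivative T)) * Qneg) :
    H * (Q * T ^ ρ) = -(derivative (Q * T ^ ρ) * Qs) := by
  have hpow : derivative (T ^ ρ) * T = ρ • (T ^ ρ * derivative T) := by
    cases ρ with
    | zero => simp
    | succ n => rw [derivative_pow_succ, nsmul_eq_mul, ← Nat.cast_succ, C_eq_natCast]; ring
  rw [nsmul_eq_mul] at hH hpow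
  rw [derivative_mul]
  linear_combination (H * T ^ ρ + c * ρ * T ^ ρ * derivative T) * hQ + (Qs * T ^ ρ) * hH
    + (Q * derivative (T ^ ρ)) * hQs + (Q * c) * hpow

theorem dvd_sum_sub_of_dvd {ι : Type*} [DecidableEq ι] {s : Finset ι} {f : ι → R} {p : R}
    {l : ι} (hl : l ∈ s) (h : ∀ i ∈ s, i ≠ l → p ∣ f i) : p ∣ ∑ i ∈ s, f i - f l := by
  rw [← add_sum_erase s f hl, add_sub_cancel_left]
  exact dvd_sum fun i hi => h i (mem_of_mem_erase hi) (ne_of_mem_erase hi)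

theorem Prime.exists_dvd_mul_derivative_sub_nsmul {p c T W : R[X]}
    (hp : Prime p) (hdvd : p ∣ c * T) (hW : p ∣ derivative (c * T) - W) :
    ∃ ε : ℕ, p ∣ c * derivative T - ε • W := by
  rcases hp.dvd_or_dvd hdvd with hc | hT
  · exact ⟨0, by simpa using hc.mul_right _⟩
  · refine ⟨1, ?_⟩
    have e : c * derivative T - 1 • W = (derivative (c * T) - W) - derivative c * T := by
      rw [derivative_mul]
      ring
    rw [e]
    exact dvd_sub hW (hT.mul_left _)

end CommRing

section Gauss

variable {R K : Type*} [CommRing R] [IsDomain R] [IsGCDMonoid R] [Field K] [Algebra R K]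
  [IsFractionRing R K]

open IsLocalization nonZeroDivisors in
theorem exists_isPrimitive_associated_map {p : K[X]} (hp : p ≠ 0) :
    ∃ p₀ : R[X], p₀.IsPrimitive ∧ Associated (p₀.map (algebraMap R K)) p := by
  let : NormalizedGCDMonoid R := Nonempty.some inferInstance
  obtain ⟨b, hb, hn⟩ := integerNormalization_spec R⁰ p
  set n := integerNormalization R⁰ p
  have hn0 : n ≠ 0 := by
    rwa [Ne, IsFractionRing.integerNormalization_eq_zero_iff]
  have hunit {a : R} (ha : a ≠ 0) : IsUnit (C (algebraMap R K a)) :=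
    isUnit_C.mpr ((map_ne_zero_iff _ (IsFractionRing.injective R K)).mpr ha).isUnit
  have key : C (algebraMap R K n.content) * n.primPart.map (algebraMap R K) =
      C (algebraMap R K b) * p := by
    rw [← map_C, ← Polynomial.map_mul, ← n.eq_C_content_mul_primPart, hn, Algebra.smul_def,
      Polynomial.algebraMap_apply]
  refine ⟨n.primPart, n.isPrimitive_primPart, ?_⟩
  refine (associated_unit_mul_right _ _ (hunit (mt content_eq_zero_iff.mp hn0))).trans ?_
  rw [key]
  exact associated_unit_mul_left _ _ (hunit (nonZeroDivisors.ne_zero hb))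

theorem Irreducible.exists_isPrimitive_lift {p : K[X]} (hp : Irreducible p) :
    ∃ p₀ : R[X], p₀.IsPrimitive ∧ Irreducible p₀ ∧
      ∀ A : R[X], p ∣ A.map (algebraMap R K) → p₀ ∣ A := by
  obtain ⟨p₀, hprim, hassoc⟩ := exists_isPrimitive_associated_map (R := R) hp.ne_zero
  refine ⟨p₀, hprim, ?_, fun A hA => hprim.dvd_of_fraction_map_dvd_fraction_map (K := K) ?_⟩
  · exact (hprim.irreducible_iff_irreducible_map_fraction_map (K := K)).mpr
      (hassoc.irreducible_iff.mpr hp)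
  · exact hassoc.dvd_iff_dvd_left.mpr hA

end Gauss

section CharZero

variable {R : Type*} [CommRing R] [IsDomain R] [CharZero R] {p : R[X]}

theorem Prime.not_dvd_natCast_of_isPrimitive (hp : Prime p) (hprim : p.IsPrimitive) {n : ℕ}
    (hn : n ≠ 0) : ¬ p ∣ (n : R[X]) := fun h =>
  hp.not_isUnit <| hprim.isUnit_of_natDegree_eq_zero <| Nat.le_zero.mp <|
    (natDegree_le_of_dvd h (Nat.cast_ne_zero.mpr hn)).trans_eq (natDegree_natCast n)

theorem Prime.not_dvd_derivative_of_squarefree (hp : Prime p) (hprim : p.IsPrimitive) {A : R[X]}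
    (hA : Squarefree A) (hpA : p ∣ A) : ¬ p ∣ derivative A := by
  obtain ⟨B, rfl⟩ := hpA
  rw [derivative_mul, dvd_add_left (dvd_mul_right _ _)]
  intro h
  rcases hp.dvd_or_dvd h with h | h
  · exact hp.not_isUnit <| hprim.isUnit_of_natDegree_eq_zero <|
      derivative_eq_zero.mp (dvd_derivative_iff.mp h)
  · exact hp.not_isUnit (hA p (mul_dvd_mul_left p h))

theorem Prime.not_dvd_leibnizTerm (hp : Prime p) (hprim : p.IsPrimitive) {Q : ℕ → R[X]} {m l : ℕ}
    (hsqf : Squarefree (Q l)) (hcop : ∀ j ∈ (range m).erase l, IsRelPrime (Q l) (Q j))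
    (hpl : p ∣ Q l) : ¬ p ∣ leibnizTerm Q m l := by
  intro h
  rcases hp.dvd_or_dvd h with h | h
  · obtain ⟨j, hj, hpj⟩ := hp.exists_mem_finset_dvd h
    exact hp.not_isUnit (hcop j hj hpl hpj)
  · exact hp.not_dvd_derivative_of_squarefree hprim hsqf hpl h

theorem Prime.not_dvd_gosperNumerator (hp : Prime p) (hprim : p.IsPrimitive) {Q : ℕ → R[X]}
    {m : ℕ} {c T : R[X]} (ρ τ : ℕ) (hsqf : ∀ i < m, Squarefree (Q i))
    (hcop : ∀ i < m, ∀ j < m, i ≠ j → IsRelPrime (Q i) (Q j))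
    (hsplit : ∏ i ∈ range m, Q i = c * T) (hdvd : p ∣ ∏ i ∈ range m, Q i) :
    ¬ p ∣ -∑ i ∈ range m, (i + 1) • leibnizTerm Q m i - ρ • (c * derivative T) -
      τ • derivative (∏ i ∈ range m, Q i) := by
  obtain ⟨l, hl, hpl⟩ := hp.exists_mem_finset_dvd hdvd
  have hlm : l < m := mem_range.mp hl
  have hW : ∀ i ∈ range m, i ≠ l → p ∣ leibnizTerm Q m i := fun i _ hi =>
    (hpl.trans (dvd_prod_of_mem _ (mem_erase.mpr ⟨hi.symm, hl⟩))).mul_right _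
  have hWl : ¬ p ∣ leibnizTerm Q m l := hp.not_dvd_leibnizTerm hprim (hsqf l hlm)
    (fun j hj => hcop l hlm j (mem_range.mp (mem_of_mem_erase hj)) (ne_of_mem_erase hj).symm) hpl
  have hQ' : p ∣ derivative (∏ i ∈ range m, Q i) - leibnizTerm Q m l := by
    rw [derivative_prod_range]
    exact dvd_sum_sub_of_dvd hl hW
  have hsum : p ∣ ∑ i ∈ range m, (i + 1) • leibnizTerm Q m i - (l + 1) • leibnizTerm Q m l :=
    dvd_sum_sub_of_dvd hl fun i hi hil => dvd_nsmul_of_dvd _ (hW i hi hil)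
  obtain ⟨ε, hε⟩ := hp.exists_dvd_mul_derivative_sub_nsmul (hsplit ▸ hdvd) (hsplit ▸ hQ')
  intro h
  have hn : p ∣ ((l + 1 + τ + ρ * ε : ℕ) : R[X]) * leibnizTerm Q m l := by
    have e : ((l + 1 + τ + ρ * ε : ℕ) : R[X]) * leibnizTerm Q m l =
        -(-∑ i ∈ range m, (i + 1) • leibnizTerm Q m i - ρ • (c * derivative T) -
          τ • derivative (∏ i ∈ range m, Q i)) -
        (∑ i ∈ range m, (i + 1) • leibnizTerm Q m i - (l + 1) • leibnizTerm Q m l) -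
        τ • (derivative (∏ i ∈ range m, Q i) - leibnizTerm Q m l) -
        ρ • (c * derivative T - ε • leibnizTerm Q m l) := by
      simp only [nsmul_eq_mul]
      push_cast
      ring
    rw [e]
    exact dvd_sub (dvd_sub (dvd_sub (dvd_neg.mpr h) hsum) (dvd_nsmul_of_dvd _ hQ'))
      (dvd_nsmul_of_dvd _ hε)
  rcases hp.dvd_or_dvd hn with hn | hn
  · exact hp.not_dvd_natCast_of_isPrimitive hprim (by omega) hn
  · exact hWl hn

end CharZero

section RationalFunctions

variable {k : Type*} [Field k]

theorem toKy_injective : Function.Injective (toKy (k := k)) :=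
  map_injective _ (IsFractionRing.injective (Polynomial k) (RatFunc k))

theorem toF_injective : Function.Injective (toF (k := k)) :=
  (IsFractionRing.injective (Polynomial (RatFunc k)) (RatFunc (RatFunc k))).comp toKy_injective

theorem toF_ne_zero {A : Polynomial (Polynomial k)} (hA : A ≠ 0) : toF A ≠ 0 :=
  (map_ne_zero_iff _ toF_injective).mpr hA

theorem toF_derivative {D : RatFunc (RatFunc k) → RatFunc (RatFunc k)}
    (hD : ∀ A, D (kyToF A) = kyToF (derivative A)) (A : Polynomial (Polynomial k)) :
    D (toF A) = toF (derivative A) := by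
  change D (kyToF (toKy A)) = kyToF (toKy (derivative A))
  rw [hD, toKy, coe_mapRingHom, derivative_map]

theorem sum_mul_toF_eq_kyToF {g : ℕ → RatFunc (RatFunc k)} {Q T : Polynomial (Polynomial k)}
    {Nseq : ℕ → Polynomial (Polynomial k)} (hg : ∀ i, g i = toF (Nseq i) / (toF Q * toF T ^ i))
    (hQ : Q ≠ 0) (hT : T ≠ 0) (ρ : ℕ) (η : Fin (ρ + 1) → RatFunc k) :
    (∑ i : Fin (ρ + 1), ratToF (η i) * g i) * toF (Q * T ^ ρ) =
      kyToF (∑ i : Fin (ρ + 1), C (η i) * toKy (Nseq i * T ^ (ρ - i))) := by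
  rw [sum_mul, map_sum]
  refine sum_congr rfl fun i _ => ?_
  have hpow : T ^ ρ = T ^ (i : ℕ) * T ^ (ρ - i) := by
    rw [← pow_add, Nat.add_sub_cancel' i.is_le]
  have hterm : kyToF (C (η i) * toKy (Nseq i * T ^ (ρ - i))) =
      ratToF (η i) * toF (Nseq i * T ^ (ρ - i)) := by
    rw [map_mul]
    rfl
  rw [hterm, hg, hpow]
  have hQF := toF_ne_zero hQ
  have hTF := toF_ne_zero hT
  simp only [map_mul, map_pow]
  field_simp

theorem toF_div_eq_neg_div_of_mul_eq {D : RatFunc (RatFunc k) → RatFunc (RatFunc k)}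
    (hD : ∀ A, D (kyToF A) = kyToF (derivative A)) {H S d : Polynomial (Polynomial k)}
    (hS : S ≠ 0) (hd : d ≠ 0) (h : H * d = -(derivative d * S)) :
    toF H / toF S = -(D (toF d) / toF d) := by
  rw [toF_derivative hD, ← neg_div, div_eq_div_iff (toF_ne_zero hS) (toF_ne_zero hd), neg_mul,
    ← map_mul, ← map_mul, ← map_neg]
  exact congrArg toF h

end RationalFunctions

theorem div_mul_eq_div_add_div_of_leibniz {K : Type*} [Field K] {D : K → K}
    (hD : ∀ a b, D (a * b) = a * D b + b * D a) {a b : K} (ha : a ≠ 0) (hb : b ≠ 0) :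
    D (a * b) / (a * b) = D a / a + D b / b := by
  rw [hD]
  field_simp
  ring

theorem stmt_13_general {k : Type*} [Field k] [CharZero k]
    (P Q : Polynomial (Polynomial k))
    (hQ : Q ≠ 0)
    (m : ℕ) (q : Polynomial k) (Qi : ℕ → Polynomial (Polynomial k))
    (hfac : Q = Polynomial.C q * ∏ i ∈ Finset.range m, Qi i ^ (i + 1))
    (hQisqf : ∀ i < m, Squarefree (Qi i))
    (hQicop : ∀ i < m, ∀ j < m, i ≠ j → IsRelPrime (Qi i) (Qi j))
    (Qs Qneg : Polynomial (Polynomial k))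
    (hQs : Qs = ∏ i ∈ Finset.range m, Qi i)
    (hQneg : Q = Qs * Qneg)
    (Dy : RatFunc (RatFunc k) → RatFunc (RatFunc k)) (hDy : IsDeriv Dy)
    (hDyval : ∀ A : Polynomial (RatFunc k), Dy (kyToF A) = kyToF (Polynomial.derivative A))
    (Dx : RatFunc (RatFunc k) → RatFunc (RatFunc k))
    -- squarefree parts of `t` and `T` with respect to `y`, with `Q* = t*·T*`
    (ts : Polynomial k) (Ts : Polynomial (Polynomial k))
    (hsplit : Qs = yToXY ts * Ts)
    -- the numerators `Nᵢ` of the derivatives of `f`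
    (Nseq : ℕ → Polynomial (Polynomial k))
    (hNseq : ∀ i : ℕ, Dx^[i] (toF P / toF Q) = toF (Nseq i) / (toF Q * toF Ts ^ i))
    (ρ : ℕ) (η : Fin (ρ + 1) → RatFunc k)
    -- `H = −D_y(Q)/Q⁻ − ρ·t*·D_y(T*)`, cleared of the denominator `Q⁻`
    (Hp : Polynomial (Polynomial k))
    (hHp : Hp * Qneg =
      -Polynomial.derivative Q - (ρ • (yToXY ts * Polynomial.derivative Ts)) * Qneg)
    -- `N = ∑ ηᵢ·Nᵢ·(T*)^{ρ−i}`
    (N : Polynomial (RatFunc k))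
    (hN : N = ∑ i : Fin (ρ + 1),
      Polynomial.C (η i) * toKy (Nseq (i : ℕ) * Ts ^ (ρ - (i : ℕ))))
    (hFne : ∑ i : Fin (ρ + 1), ratToF (η i) * Dx^[(i : ℕ)] (toF P / toF Q) ≠ 0) :
    Dy (∑ i : Fin (ρ + 1), ratToF (η i) * Dx^[(i : ℕ)] (toF P / toF Q)) /
        (∑ i : Fin (ρ + 1), ratToF (η i) * Dx^[(i : ℕ)] (toF P / toF Q)) =
      Dy (kyToF N) / kyToF N + toF Hp / toF Qs ∧
    ∀ τ : ℕ, IsCoprime (toKy Qs) (toKy (Hp - τ • Polynomial.derivative Qs)) := by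
  have hQs0 : Qs ≠ 0 := left_ne_zero_of_mul (hQneg ▸ hQ)
  have hQneg0 : Qneg ≠ 0 := right_ne_zero_of_mul (hQneg ▸ hQ)
  have hTs0 : Ts ≠ 0 := right_ne_zero_of_mul (hsplit ▸ hQs0)
  refine ⟨?_, fun τ => ?_⟩
  · have hd : Q * Ts ^ ρ ≠ 0 := mul_ne_zero hQ (pow_ne_zero _ hTs0)
    have hFd := hN ▸ sum_mul_toF_eq_kyToF hNseq hQ hTs0 ρ η
    have hH := toF_div_eq_neg_div_of_mul_eq hDyval hQs0 hd
      (mul_mul_pow_eq_neg_derivative_mul ρ hQneg hsplit hHp)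
    rw [hH, ← hFd, div_mul_eq_div_add_div_of_leibniz hDy.2 hFne (toF_ne_zero hd)]
    ring
  · have hHp' : Hp = -∑ i ∈ range m, (i + 1) • leibnizTerm Qi m i -
        ρ • (yToXY ts * derivative Ts) := by
      refine mul_right_cancel₀ hQneg0 ?_
      rw [hHp, derivative_eq_mul_sum_leibnizTerm hfac hQs hQneg hQ]
      ring
    refine isCoprime_of_irreducible_dvd
      (fun h => hQs0 (toKy_injective (h.1.trans (map_zero _).symm))) fun z hz hzQs hzH => ?_
    obtain ⟨p, hprim, hirr, hlift⟩ := hz.exists_isPrimitive_lift (R := Polynomial k)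
    subst hQs
    refine (UniqueFactorizationMonoid.irreducible_iff_prime.mp hirr).not_dvd_gosperNumerator hprim
      ρ τ hQisqf hQicop hsplit (hlift _ hzQs) ?_
    rw [← hHp']
    exact hlift _ hzH

/-- Lemma `le:dGf-for-F'/F`. Under Hypothesis (H), write `Q = t(y)·T(x,y)`
with `t` the content and `T` the primitive part of `Q` w.r.t. `x`, and let `t*`, `T*` be the
squarefree parts of `t`, `T` w.r.t. `y` (so `Q* = t*·T*`). With `Nᵢ` defined by
`D_x^i(f) = Nᵢ/(Q·(T*)^i)`, `F = ∑ ηᵢ·D_x^i(f)`, `N = ∑ ηᵢ·Nᵢ·(T*)^{ρ−i}` and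
`H = −D_y(Q)/Q⁻ − ρ·t*·D_y(T*)`: if `F ≠ 0` then `(N, H, Q*)` is a differential Gosper form
of `D_y(F)/F`, i.e. `D_y(F)/F = D_y(N)/N + H/Q*` and `gcd(Q*, H − τ·D_y(Q*)) = 1` in
`k(x)[y]` for every natural number `τ`. -/
theorem stmt_13 {k : Type*} [Field k] [CharZero k]
    (P Q : Polynomial (Polynomial k))
    (hP : P ≠ 0) (hQ : Q ≠ 0)
    (hPQdeg : P.degree < Q.degree)
    (hPQcop : IsRelPrime P Q)
    (hQprimY : Q.IsPrimitive)
    (m : ℕ) (hm : 0 < m) (q : Polynomial k) (Qi : ℕ → Polynomial (Polynomial k))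
    (hfac : Q = Polynomial.C q * ∏ i ∈ Finset.range m, Qi i ^ (i + 1))
    (hQiprim : ∀ i < m, (Qi i).IsPrimitive)
    (hQisqf : ∀ i < m, Squarefree (Qi i))
    (hQicop : ∀ i < m, ∀ j < m, i ≠ j → IsRelPrime (Qi i) (Qi j))
    (hQim : 0 < (Qi (m - 1)).natDegree)
    (Qs Qneg : Polynomial (Polynomial k))
    (hQs : Qs = ∏ i ∈ Finset.range m, Qi i)
    (hQneg : Q = Qs * Qneg)
    (Dy : RatFunc (RatFunc k) → RatFunc (RatFunc k)) (hDy : IsDeriv Dy)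
    (hDyval : ∀ A : Polynomial (RatFunc k), Dy (kyToF A) = kyToF (Polynomial.derivative A))
    (Dx : RatFunc (RatFunc k) → RatFunc (RatFunc k)) (hDx : IsDeriv Dx)
    (hDxval : ∀ A : Polynomial (Polynomial k), Dx (toF A) = toF (derivX A))
    -- content/primitive part of `Q` with respect to `x`
    (t : Polynomial k) (T : Polynomial (Polynomial k))
    (hQtT : Q = yToXY t * T)
    (hTprim : ∀ s : Polynomial k, yToXY s ∣ T → IsUnit s)
    -- squarefree parts of `t` and `T` with respect to `y`, with `Q* = t*·T*`
    (ts : Polynomial k) (Ts : Polynomial (Polynomial k))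
    (hts : ts ∣ t) (hTs : Ts ∣ T)
    (hsplit : Qs = yToXY ts * Ts)
    -- the numerators `Nᵢ` of the derivatives of `f`
    (Nseq : ℕ → Polynomial (Polynomial k))
    (hNseq : ∀ i : ℕ, Dx^[i] (toF P / toF Q) = toF (Nseq i) / (toF Q * toF Ts ^ i))
    (ρ : ℕ) (η : Fin (ρ + 1) → RatFunc k)
    -- `H = −D_y(Q)/Q⁻ − ρ·t*·D_y(T*)`, cleared of the denominator `Q⁻`
    (Hp : Polynomial (Polynomial k))
    (hHp : Hp * Qneg =
      -Polynomial.derivative Q - (ρ • (yToXY ts * Polynomial.derivative Ts)) * Qneg)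
    -- `N = ∑ ηᵢ·Nᵢ·(T*)^{ρ−i}`
    (N : Polynomial (RatFunc k))
    (hN : N = ∑ i : Fin (ρ + 1),
      Polynomial.C (η i) * toKy (Nseq (i : ℕ) * Ts ^ (ρ - (i : ℕ))))
    (hFne : ∑ i : Fin (ρ + 1), ratToF (η i) * Dx^[(i : ℕ)] (toF P / toF Q) ≠ 0) :
    Dy (∑ i : Fin (ρ + 1), ratToF (η i) * Dx^[(i : ℕ)] (toF P / toF Q)) /
        (∑ i : Fin (ρ + 1), ratToF (η i) * Dx^[(i : ℕ)] (toF P / toF Q)) =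
      Dy (kyToF N) / kyToF N + toF Hp / toF Qs ∧
    ∀ τ : ℕ, IsCoprime (toKy Qs) (toKy (Hp - τ • Polynomial.derivative Qs)) :=
  stmt_13_general P Q hQ m q Qi hfac hQisqf hQicop Qs Qneg hQs hQneg Dy hDy hDyval Dx ts Ts hsplit
    Nseq hNseq ρ η Hp hHp N hN hFne
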